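/- For p ∈ (0,1) and x > 0, the inequality (1 - e^{-β x^p})^{1/p} < (∫₀ˣ e^{-t^p} dt) / Γ(1 + 1/p) holds, where β = [Γ(1 + 1/p)]^{-p}. -/

import Mathlib

open Real Set Filter MeasureTheory intervalIntegral
open scoped Topology

/-!
Put `a = 1/p > 1`, `y = x^p` and `c = Γ(1 + 1/p)^{-p}`, so that `c^a Γ(a + 1) = 1`. The
substitution `t = s^{1/p}` turns the inequality into `(1 - e^{-cy})^a < γ(a, y) / Γ(a)`, i.e. into
positivity of the gap `h(y) = γ(a, y) / Γ(a) - (1 - e^{-cy})^a`, which vanishes at `0` and tends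
to `0` at `∞`. Its derivative is `A(y) (e^{L(y)} - 1)` with `A > 0` and
`L(y) = (a - 1) u(cy) + (c - 1) y`, where `u(s) = log (s / (1 - e^{-s}))`; the normalisation of `c`
is what removes the constant term from `L`. Since `u` is strictly concave and `u(0+) = 0`, `L(y) / y` is
strictly decreasing, so `L`, hence `h'`, is positive and then negative: `h` increases and then
decreases, so it is positive on `(0, ∞)`.
-/

theorem StrictConcaveOn.strictAntiOn_div_self {f : ℝ → ℝ} (hf : StrictConcaveOn ℝ (Ici 0) f)
    (h0 : f 0 = 0) : StrictAntiOn (fun x => f x / x) (Ioi 0) := by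
  intro x hx y hy hxy
  simpa [h0] using hf.secant_strict_mono self_mem_Ici (Ioi_subset_Ici_self hx)
    (Ioi_subset_Ici_self hy) (ne_of_gt hx) (ne_of_gt hy) hxy

theorem pos_Ioo_or_neg_Ioi_of_strictAntiOn_div_self {f : ℝ → ℝ}
    (hf : StrictAntiOn (fun x => f x / x) (Ioi 0)) {y : ℝ} (hy : 0 < y) :
    (∀ x ∈ Ioo 0 y, 0 < f x) ∨ ∀ x ∈ Ioi y, f x < 0 := by
  rcases le_or_gt 0 (f y) with hfy | hfy
  · refine Or.inl fun x ⟨hx0, hxy⟩ => ?_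
    have : f y / y < f x / x := hf hx0 hy hxy
    have : 0 < f x / x := (div_nonneg hfy hy.le).trans_lt this
    exact (div_pos_iff_of_pos_right hx0).1 this
  · refine Or.inr fun x (hyx : y < x) => ?_
    have : f x / x < f y / y := hf hy (hy.trans hyx) hyx
    have : f x / x < 0 := this.trans (div_neg_of_neg_of_pos hfy hy)
    simpa using (div_lt_iff₀ (hy.trans hyx)).1 this

theorem pos_of_deriv_pos_Ioo_or_neg_Ioi {h h' : ℝ → ℝ} {y : ℝ} (hcont : ContinuousOn h (Ici 0))
    (hderiv : ∀ x > 0, HasDerivAt h (h' x) x) (h0 : h 0 = 0)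
    (htop : Tendsto h atTop (𝓝 0)) (hy : 0 < y)
    (hsign : (∀ x ∈ Ioo 0 y, 0 < h' x) ∨ ∀ x ∈ Ioi y, h' x < 0) : 0 < h y := by
  rcases hsign with hpos | hneg
  · have hmono : StrictMonoOn h (Icc 0 y) := by
      refine strictMonoOn_of_deriv_pos (convex_Icc 0 y) (hcont.mono Icc_subset_Ici_self) ?_
      intro x hx
      rw [interior_Icc] at hx
      rw [(hderiv x hx.1).deriv]
      exact hpos x hx
    simpa [h0] using hmono (left_mem_Icc.2 hy.le) (right_mem_Icc.2 hy.le) hy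
  · have hanti : StrictAntiOn h (Ici y) := by
      refine strictAntiOn_of_deriv_neg (convex_Ici y) (hcont.mono (Ici_subset_Ici.2 hy.le)) ?_
      intro x hx
      rw [interior_Ici] at hx
      rw [(hderiv x (hy.trans hx)).deriv]
      exact hneg x hx
    have hlt : h (y + 1) < h y := hanti self_mem_Ici (by simp) (by simp)
    have hnonneg : 0 ≤ h (y + 1) := by
      refine le_of_tendsto htop ?_
      filter_upwards [eventually_ge_atTop (y + 1)] with x hx
      exact hanti.antitoneOn (by simp) (by simp; linarith) hx
    linarith

namespace Alzer

/-- `log (s / (1 - e^{-s}))` for `s > 0`; the junk value `log 0 = 0` makes it vanish at `0`. -/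
noncomputable def logDivOneSubExpNeg (s : ℝ) : ℝ := log s - log (1 - exp (-s))

theorem one_sub_exp_neg_pos {s : ℝ} (hs : 0 < s) : 0 < 1 - exp (-s) :=
  sub_pos.2 (exp_lt_one_iff.2 (neg_neg_of_pos hs))

theorem sq_mul_exp_neg_lt_sq_one_sub_exp_neg {s : ℝ} (hs : 0 < s) :
    s ^ 2 * exp (-s) < (1 - exp (-s)) ^ 2 := by
  -- `s < 2 sinh (s / 2)`, multiplied by `e^{-s/2}` and squared
  have hsinh : s < exp (s / 2) - exp (-(s / 2)) := by
    have := self_lt_sinh_iff.2 (half_pos hs)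
    rw [sinh_eq] at this
    linarith
  have hhalf : s * exp (-(s / 2)) < 1 - exp (-s) := by
    calc s * exp (-(s / 2)) < (exp (s / 2) - exp (-(s / 2))) * exp (-(s / 2)) :=
          mul_lt_mul_of_pos_right hsinh (exp_pos _)
      _ = 1 - exp (-s) := by
          rw [sub_mul, ← exp_add, ← exp_add]
          ring_nf
          rw [exp_zero]
  calc s ^ 2 * exp (-s) = (s * exp (-(s / 2))) ^ 2 := by
        rw [mul_pow, ← exp_nat_mul]
        ring_nf
    _ < (1 - exp (-s)) ^ 2 := by gcongr

theorem hasDerivAt_logDivOneSubExpNeg {s : ℝ} (hs : 0 < s) :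
    HasDerivAt logDivOneSubExpNeg (s⁻¹ - exp (-s) / (1 - exp (-s))) s := by
  have hE : HasDerivAt (fun s => 1 - exp (-s)) (exp (-s)) s := by
    simpa using ((hasDerivAt_neg s).exp).const_sub 1
  exact (hasDerivAt_log hs.ne').sub (hE.log (one_sub_exp_neg_pos hs).ne')

theorem hasDerivAt_deriv_logDivOneSubExpNeg {s : ℝ} (hs : 0 < s) :
    HasDerivAt (fun s => s⁻¹ - exp (-s) / (1 - exp (-s)))
      (exp (-s) / (1 - exp (-s)) ^ 2 - (s ^ 2)⁻¹) s := by
  have hexp : HasDerivAt (fun s => exp (-s)) (-exp (-s)) s := by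
    simpa using (hasDerivAt_neg s).exp
  have hquot := hexp.fun_div (hexp.const_sub 1) (one_sub_exp_neg_pos hs).ne'
  refine ((hasDerivAt_inv hs.ne').fun_sub hquot).congr_deriv ?_
  ring

theorem tendsto_logDivOneSubExpNeg_nhdsGT_zero :
    Tendsto logDivOneSubExpNeg (𝓝[>] 0) (𝓝 0) := by
  have hslope : Tendsto (fun s => s⁻¹ * (1 - exp (-s))) (𝓝[>] 0) (𝓝 1) := by
    have hE : HasDerivAt (fun s => 1 - exp (-s)) 1 0 := by
      simpa using ((hasDerivAt_neg 0).exp).const_sub 1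
    simpa using hE.tendsto_slope_zero_right
  have hlog := ((continuousAt_log one_ne_zero).tendsto.comp hslope).neg
  rw [log_one, neg_zero] at hlog
  refine hlog.congr' ?_
  filter_upwards [self_mem_nhdsWithin] with s (hs : 0 < s)
  rw [Function.comp_apply, log_mul (inv_ne_zero hs.ne') (one_sub_exp_neg_pos hs).ne', log_inv,
    logDivOneSubExpNeg]
  ring

theorem strictConcaveOn_logDivOneSubExpNeg : StrictConcaveOn ℝ (Ici 0) logDivOneSubExpNeg := by
  refine strictConcaveOn_of_deriv2_neg (convex_Ici 0) (fun s hs => ?_) (fun s hs => ?_)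
  · rcases (mem_Ici.1 hs).eq_or_lt with rfl | hs
    · rw [← continuousWithinAt_Ioi_iff_Ici, ContinuousWithinAt]
      simpa [logDivOneSubExpNeg] using tendsto_logDivOneSubExpNeg_nhdsGT_zero
    · exact (hasDerivAt_logDivOneSubExpNeg hs).continuousAt.continuousWithinAt
  · rw [interior_Ici] at hs
    have hs : 0 < s := hs
    have hderiv : deriv logDivOneSubExpNeg =ᶠ[𝓝 s] fun s => s⁻¹ - exp (-s) / (1 - exp (-s)) := by
      filter_upwards [Ioi_mem_nhds hs] with t ht
      exact (hasDerivAt_logDivOneSubExpNeg ht).deriv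
    rw [Function.iterate_succ_apply, Function.iterate_one, hderiv.deriv_eq,
      (hasDerivAt_deriv_logDivOneSubExpNeg hs).deriv, sub_neg,
      div_lt_iff₀ (pow_pos (one_sub_exp_neg_pos hs) 2), inv_mul_eq_div, lt_div_iff₀ (by positivity)]
    linarith [sq_mul_exp_neg_lt_sq_one_sub_exp_neg hs]

noncomputable def logDerivRatio (a c y : ℝ) : ℝ :=
  (a - 1) * logDivOneSubExpNeg (c * y) + (c - 1) * y

theorem strictAntiOn_logDerivRatio_div_self {a c : ℝ} (ha : 1 < a) (hc : 0 < c) :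
    StrictAntiOn (fun y => logDerivRatio a c y / y) (Ioi 0) := by
  have hu := strictConcaveOn_logDivOneSubExpNeg.strictAntiOn_div_self
    (by simp [logDivOneSubExpNeg])
  have hdiv : ∀ y : ℝ, 0 < y → logDerivRatio a c y / y =
      (a - 1) * c * (logDivOneSubExpNeg (c * y) / (c * y)) + (c - 1) := by
    intro y hy
    rw [logDerivRatio]
    field_simp
  intro x (hx : 0 < x) y (hy : 0 < y) hxy
  simp only [hdiv x hx, hdiv y hy]
  have := hu (mul_pos hc hx) (mul_pos hc hy) (mul_lt_mul_of_pos_left hxy hc)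
  gcongr ?_ + _
  exact mul_lt_mul_of_pos_left this (mul_pos (sub_pos.2 ha) hc)

noncomputable def gap (a c y : ℝ) : ℝ :=
  (∫ t in (0 : ℝ)..y, exp (-t) * t ^ (a - 1)) / Gamma a - (1 - exp (-(c * y))) ^ a

theorem continuous_gammaIntegrand {a : ℝ} (ha : 1 ≤ a) :
    Continuous fun t : ℝ => exp (-t) * t ^ (a - 1) :=
  (continuous_exp.comp continuous_neg).mul (continuous_rpow_const (sub_nonneg.2 ha))

theorem continuous_gap {a : ℝ} (ha : 1 ≤ a) (c : ℝ) : Continuous (gap a c) := by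
  refine ((continuous_primitive (fun u v => (continuous_gammaIntegrand ha).intervalIntegrable u v)
    0).div_const _).sub ?_
  exact (continuous_const.sub (continuous_exp.comp (continuous_const.mul continuous_id).neg))
    |>.rpow_const fun _ => Or.inr (by linarith)

theorem gap_zero {a : ℝ} (ha : a ≠ 0) (c : ℝ) : gap a c 0 = 0 := by
  simp [gap, zero_rpow ha]

theorem tendsto_gap_atTop {a c : ℝ} (ha : 0 < a) (hc : 0 < c) :
    Tendsto (gap a c) atTop (𝓝 0) := by
  have hγ : Tendsto (fun y => ∫ t in (0 : ℝ)..y, exp (-t) * t ^ (a - 1)) atTop (𝓝 (Gamma a)) := by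
    rw [Gamma_eq_integral ha]
    exact intervalIntegral_tendsto_integral_Ioi 0 (GammaIntegral_convergent ha) tendsto_id
  have hE : Tendsto (fun y => (1 - exp (-(c * y))) ^ a) atTop (𝓝 1) := by
    have h := (tendsto_exp_neg_atTop_nhds_zero.comp (tendsto_id.const_mul_atTop hc)).const_sub 1
    simpa using h.rpow_const (Or.inl (by simp))
  have h := (hγ.div_const (Gamma a)).sub hE
  rwa [div_self (Gamma_pos_of_pos ha).ne', sub_self] at h

theorem gammaIntegrand_div_Gamma_eq {a c y : ℝ} (ha : 0 < a) (hc : 0 < c)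
    (hca : c ^ a * Gamma (a + 1) = 1) (hy : 0 < y) :
    exp (-y) * y ^ (a - 1) / Gamma a =
      a * c * exp (-(c * y)) * (1 - exp (-(c * y))) ^ (a - 1) * exp (logDerivRatio a c y) := by
  have hE := one_sub_exp_neg_pos (mul_pos hc hy)
  have hexpL : exp (logDerivRatio a c y) =
      (c * y) ^ (a - 1) / (1 - exp (-(c * y))) ^ (a - 1) * exp ((c - 1) * y) := by
    rw [logDerivRatio, logDivOneSubExpNeg, exp_add, mul_sub, exp_sub, mul_comm (a - 1),
      mul_comm (a - 1), ← rpow_def_of_pos (mul_pos hc hy), ← rpow_def_of_pos hE]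
  have hca' : a * c ^ a * Gamma a = 1 := by
    rw [Gamma_add_one ha.ne'] at hca
    linear_combination hca
  have hcpow : c * c ^ (a - 1) = c ^ a := by
    rw [← rpow_one_add' hc.le (by linarith), add_sub_cancel]
  have hexp : exp (-(c * y)) * exp ((c - 1) * y) = exp (-y) := by
    rw [← exp_add]; ring_nf
  have hEpow : (1 - exp (-(c * y))) ^ (a - 1) ≠ 0 := (rpow_pos_of_pos hE _).ne'
  rw [hexpL, mul_rpow hc.le hy.le, div_eq_iff (Gamma_pos_of_pos ha).ne']
  calc exp (-y) * y ^ (a - 1)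
      = (a * c ^ a * Gamma a) * y ^ (a - 1) * exp (-y) *
          ((1 - exp (-(c * y))) ^ (a - 1) / (1 - exp (-(c * y))) ^ (a - 1)) := by
        rw [hca', div_self hEpow]; ring
    _ = _ := by rw [← hcpow, ← hexp]; ring

theorem hasDerivAt_gap {a c y : ℝ} (ha : 1 ≤ a) (hc : 0 < c)
    (hca : c ^ a * Gamma (a + 1) = 1) (hy : 0 < y) :
    HasDerivAt (gap a c)
      (a * c * exp (-(c * y)) * (1 - exp (-(c * y))) ^ (a - 1) *
        (exp (logDerivRatio a c y) - 1)) y := by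
  have hcont := continuous_gammaIntegrand ha
  have hγ : HasDerivAt (fun y => ∫ t in (0 : ℝ)..y, exp (-t) * t ^ (a - 1))
      (exp (-y) * y ^ (a - 1)) y :=
    integral_hasDerivAt_right (hcont.intervalIntegrable _ _)
      (hcont.stronglyMeasurableAtFilter _ _) hcont.continuousAt
  have hE : HasDerivAt (fun y => 1 - exp (-(c * y))) (c * exp (-(c * y))) y := by
    have hlin : HasDerivAt (fun y => -(c * y)) (-c) y := by
      simpa using ((hasDerivAt_id y).const_mul c).fun_neg
    exact (hlin.exp.const_sub 1).congr_deriv (by ring)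
  have hEa := hE.rpow_const (p := a) (Or.inl (one_sub_exp_neg_pos (mul_pos hc hy)).ne')
  refine ((hγ.div_const (Gamma a)).sub hEa).congr_deriv ?_
  rw [gammaIntegrand_div_Gamma_eq (by linarith) hc hca hy]
  ring

theorem gap_pos {a c y : ℝ} (ha : 1 < a) (hc : 0 < c)
    (hca : c ^ a * Gamma (a + 1) = 1) (hy : 0 < y) : 0 < gap a c y := by
  refine pos_of_deriv_pos_Ioo_or_neg_Ioi (continuous_gap ha.le c).continuousOn
    (fun x hx => hasDerivAt_gap ha.le hc hca hx) (gap_zero (by linarith) c)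
    (tendsto_gap_atTop (by linarith) hc) hy ?_
  have hfactor : ∀ x > 0, 0 < a * c * exp (-(c * x)) * (1 - exp (-(c * x))) ^ (a - 1) := by
    intro x hx
    have := one_sub_exp_neg_pos (mul_pos hc hx)
    have : 0 < a := by linarith
    positivity
  refine (pos_Ioo_or_neg_Ioi_of_strictAntiOn_div_self (strictAntiOn_logDerivRatio_div_self ha hc)
    hy).imp (fun hpos x hx => ?_) (fun hneg x hx => ?_)
  · exact mul_pos (hfactor x hx.1) (sub_pos.2 (one_lt_exp_iff.2 (hpos x hx)))
  · exact mul_neg_of_pos_of_neg (hfactor x (hy.trans hx))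
      (sub_neg.2 (exp_lt_one_iff.2 (hneg x hx)))

theorem integral_exp_neg_rpow_eq {p x : ℝ} (hp : 0 < p) (hx : 0 ≤ x) :
    ∫ t in (0 : ℝ)..x, exp (-(t ^ p)) =
      1 / p * ∫ s in (0 : ℝ)..x ^ p, exp (-s) * s ^ (1 / p - 1) := by
  have hxp : 0 ≤ x ^ p := rpow_nonneg hx p
  have hderiv : ∀ s ∈ Ioo (min 0 (x ^ p)) (max 0 (x ^ p)),
      HasDerivAt (fun s => s ^ (1 / p)) (1 / p * s ^ (1 / p - 1)) s := by
    rw [min_eq_left hxp, max_eq_right hxp]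
    exact fun s hs => hasDerivAt_rpow_const (Or.inl hs.1.ne')
  have hderiv_nonneg :
      ∀ s ∈ Ioo (min 0 (x ^ p)) (max 0 (x ^ p)), 0 ≤ 1 / p * s ^ (1 / p - 1) := by
    rw [min_eq_left hxp, max_eq_right hxp]
    exact fun s hs => mul_nonneg (by positivity) (rpow_nonneg hs.1.le _)
  have hsub := integral_comp_mul_deriv_of_deriv_nonneg (g := fun t => exp (-(t ^ p)))
    (f' := fun s => 1 / p * s ^ (1 / p - 1))
    (continuous_rpow_const (one_div_nonneg.2 hp.le)).continuousOn
    hderiv hderiv_nonneg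
  rw [zero_rpow (one_div_ne_zero hp.ne'), ← rpow_mul hx, mul_one_div_cancel hp.ne', rpow_one]
    at hsub
  rw [← hsub, ← intervalIntegral.integral_const_mul]
  refine integral_congr fun s hs => ?_
  rw [uIcc_of_le hxp] at hs
  simp only [Function.comp_apply]
  rw [← rpow_mul hs.1, one_div_mul_cancel hp.ne', rpow_one]
  ring

end Alzer

/-- Alzer's inequality: for `p ∈ (0,1)` and `x > 0`,
`(1 - e^{-β x^p})^{1/p} < (∫₀ˣ e^{-t^p} dt) / Γ(1 + 1/p)` where `β = Γ(1 + 1/p)^{-p}`. -/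
theorem alzer_inequality (p x : ℝ) (hp : 0 < p) (hp1 : p < 1) (hx : 0 < x) :
    (1 - Real.exp (-(Real.Gamma (1 + 1 / p) ^ (-p) * x ^ p))) ^ (1 / p) <
      (∫ t in (0 : ℝ)..x, Real.exp (-(t ^ p))) / Real.Gamma (1 + 1 / p) := by
  have ha : 1 < 1 / p := by rwa [lt_one_div one_pos hp, div_one]
  have hG : 0 < Gamma (1 + 1 / p) := Gamma_pos_of_pos (by positivity)
  have hca : (Gamma (1 + 1 / p) ^ (-p)) ^ (1 / p) * Gamma (1 / p + 1) = 1 := by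
    rw [← rpow_mul hG.le, neg_mul, mul_one_div_cancel hp.ne', rpow_neg_one, add_comm (1 / p) 1,
      inv_mul_cancel₀ hG.ne']
  have hGamma : Gamma (1 + 1 / p) = 1 / p * Gamma (1 / p) := by
    rw [add_comm, Gamma_add_one (by positivity)]
  have hgap := Alzer.gap_pos ha (rpow_pos_of_pos hG _) hca (rpow_pos_of_pos hx p)
  rw [Alzer.gap, sub_pos] at hgap
  refine hgap.trans_eq ?_
  rw [Alzer.integral_exp_neg_rpow_eq hp hx.le, hGamma,
    mul_div_mul_left _ _ (by positivity : (1 / p) ≠ 0)]
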